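/- Fix $d \geq 2$ and let $h(a) = \theta_{d-1}\int_0^a (1-y^2)^{(d-1)/2}\,dy$ for $a \in [0,1]$. Let $\ell \in \mathbb{Z}_{\geq 0}$, $\alpha_0 > 0$ and $\varepsilon \in (0,1)$. Then as $s \to \infty$, $$\theta_{d-1} \int_0^1 e^{-s h(a)} (\alpha_0 + h(a))^{\ell}\, da = \alpha_0^{\ell} s^{-1} + \ell \alpha_0^{\ell-1} s^{-2} + O(s^{\varepsilon - 3}).$$ -/

import Mathlib

open MeasureTheory Metric Set Real

/-- θ_n, the Lebesgue volume of the unit Euclidean ball in ℝ^n. -/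
noncomputable def ubv (n : ℕ) : ℝ :=
  (volume (Metric.ball (0 : EuclideanSpace ℝ (Fin n)) 1)).toReal

/-- The slab-volume function `h(a) = θ_{d-1} ∫_0^a (1-y²)^{(d-1)/2} dy`. -/
noncomputable def hSlab (d : ℕ) (a : ℝ) : ℝ :=
  ubv (d-1) * ∫ y in (0:ℝ)..a, (1 - y^2) ^ (((d:ℝ) - 1)/2)

/-!
Write `θ = θ_{d-1}`, `h = hSlab d` and `p = (d-1)/2`. From `1 - max p 1 · y² ≤ (1-y²)^p ≤ 1` on
`[0, 1]` we get `θ a - K a³ ≤ h a ≤ θ a`, and since `h` is increasing also `h a ≥ c a` for some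
`c > 0`. Replacing `e^{-s h(a)} (α₀ + h(a))^ℓ` by the model `e^{-sθa} (α₀^ℓ + ℓ α₀^{ℓ-1} θ a)`
costs pointwise `O((s a³ + a²) e^{-sca})`, whose integral is `O(s⁻³)` because
`∫₀¹ aⁿ e^{-μa} da ≤ n!/μ^{n+1}`. The model integral is explicit and differs from
`α₀^ℓ/s + ℓ α₀^{ℓ-1}/s²` by an exponentially small term, so the error is even `O(s⁻³)`.
-/

open Filter Asymptotics intervalIntegral
open scoped Nat

lemma exp_neg_sub_exp_neg_le (x y : ℝ) :
    exp (-x) - exp (-y) ≤ (y - x) * exp (-x) := by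
  have hsplit : exp (-y) = exp (-x) * exp (-(y - x)) := by rw [← exp_add]; ring_nf
  rw [hsplit]
  nlinarith [one_sub_le_exp_neg (y - x), exp_pos (-x)]

lemma abs_exp_mul_sub_exp_mul_le {s x y G G' B E : ℝ} (hs : 0 ≤ s) (hxy : x ≤ y)
    (hG : |G| ≤ B) (hGG' : |G - G'| ≤ E) :
    |exp (-(s * x)) * G - exp (-(s * y)) * G'|
      ≤ s * (y - x) * exp (-(s * x)) * B + exp (-(s * y)) * E := by
  have hexp : exp (-(s * x)) - exp (-(s * y)) ≤ s * (y - x) * exp (-(s * x)) := by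
    simpa only [← mul_sub] using exp_neg_sub_exp_neg_le (s * x) (s * y)
  have hmono : exp (-(s * y)) ≤ exp (-(s * x)) := by gcongr
  calc |exp (-(s * x)) * G - exp (-(s * y)) * G'|
      = |(exp (-(s * x)) - exp (-(s * y))) * G + exp (-(s * y)) * (G - G')| := by ring_nf
    _ ≤ (exp (-(s * x)) - exp (-(s * y))) * |G| + exp (-(s * y)) * |G - G'| := by
      refine (abs_add_le _ _).trans_eq ?_
      rw [abs_mul, abs_mul, abs_of_nonneg (sub_nonneg.2 hmono), abs_of_pos (exp_pos _)]
    _ ≤ s * (y - x) * exp (-(s * x)) * B + exp (-(s * y)) * E := by gcongr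

lemma exists_abs_add_pow_sub_le (A b : ℝ) (n : ℕ) :
    ∃ M, ∀ t, |t| ≤ b → |(A + t) ^ n - A ^ n - n * A ^ (n - 1) * t| ≤ M * t ^ 2 := by
  induction n with
  | zero => exact ⟨0, fun t _ => by simp⟩
  | succ n ih =>
    obtain ⟨M, hM⟩ := ih
    refine ⟨(|A| + b) * M + n * |A| ^ (n - 1), fun t ht => ?_⟩
    have hpow : (n : ℝ) * A ^ (n - 1) * A = n * A ^ n := by
      rcases n with _ | n
      · simp
      · simp [pow_succ, mul_assoc]
    have hrec : (A + t) ^ (n + 1) - A ^ (n + 1) - ((n + 1 : ℕ) : ℝ) * A ^ (n + 1 - 1) * t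
        = (A + t) * ((A + t) ^ n - A ^ n - n * A ^ (n - 1) * t) + n * A ^ (n - 1) * t ^ 2 := by
      rw [Nat.add_sub_cancel]; push_cast; linear_combination t * hpow
    have hMt : 0 ≤ M * t ^ 2 := (abs_nonneg _).trans (hM t ht)
    rw [hrec]
    calc _ ≤ |A + t| * (M * t ^ 2) + n * |A| ^ (n - 1) * t ^ 2 := by
          refine (abs_add_le _ _).trans (add_le_add ?_ (le_of_eq ?_))
          · rw [abs_mul]; exact mul_le_mul_of_nonneg_left (hM t ht) (abs_nonneg _)
          · simp [abs_mul, abs_pow]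
      _ ≤ (|A| + b) * (M * t ^ 2) + n * |A| ^ (n - 1) * t ^ 2 := by
          gcongr
          exact (abs_add_le _ _).trans (by linarith)
      _ = _ := by ring

lemma abs_sub_affine_le_of_taylor {G g₀ g₁ M K θ a x : ℝ} (ha : a ∈ Icc (0:ℝ) 1)
    (hK : 0 ≤ K) (hM : 0 ≤ M) (hx : x ∈ Icc 0 (θ * a)) (hKx : θ * a - K * a ^ 3 ≤ x)
    (hG : |G - g₀ - g₁ * x| ≤ M * x ^ 2) :
    |G - (g₀ + g₁ * (θ * a))| ≤ (M * θ ^ 2 + |g₁| * K) * a ^ 2 := calc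
  _ = |(G - g₀ - g₁ * x) - g₁ * (θ * a - x)| := by ring_nf
  _ ≤ M * x ^ 2 + |g₁| * (K * a ^ 3) := by
    refine (abs_sub _ _).trans (add_le_add hG ?_)
    rw [abs_mul, abs_of_nonneg (sub_nonneg.2 hx.2)]
    gcongr
    linarith
  _ ≤ M * (θ * a) ^ 2 + |g₁| * (K * a ^ 2) := by
    gcongr M * ?_ ^ 2 + _ * (_ * ?_)
    · exact hx.1
    · exact hx.2
    · exact pow_le_pow_of_le_one ha.1 ha.2 (by norm_num)
  _ = (M * θ ^ 2 + |g₁| * K) * a ^ 2 := by ring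

lemma integral_exp_neg_mul_affine (θ g₀ g₁ : ℝ) {s : ℝ} (hs : s ≠ 0) :
    θ * ∫ a in (0:ℝ)..1, exp (-(s * θ * a)) * (g₀ + g₁ * (θ * a))
      = g₀ / s + g₁ / s ^ 2 - exp (-(s * θ)) * ((g₀ + g₁ * θ) / s + g₁ / s ^ 2) := by
  have hderiv : ∀ a ∈ uIcc (0:ℝ) 1, HasDerivAt
      (fun a => -(exp (-(s * θ * a)) * ((g₀ + g₁ * (θ * a)) / s + g₁ / s ^ 2)))
      (θ * (exp (-(s * θ * a)) * (g₀ + g₁ * (θ * a)))) a := by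
    intro a _
    have hexp : HasDerivAt (fun a => exp (-(s * θ * a))) (exp (-(s * θ * a)) * -(s * θ)) a := by
      simpa using ((hasDerivAt_id a).const_mul (s * θ)).fun_neg.exp
    have hlin : HasDerivAt (fun a => (g₀ + g₁ * (θ * a)) / s + g₁ / s ^ 2) (g₁ * θ / s) a := by
      simpa using (((hasDerivAt_id a).const_mul θ).const_mul g₁).const_add g₀ |>.div_const s
        |>.add_const (g₁ / s ^ 2)
    exact (hexp.fun_mul hlin).fun_neg.congr_deriv (by field_simp; ring)
  rw [← intervalIntegral.integral_const_mul, integral_eq_sub_of_hasDerivAt hderiv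
    (Continuous.intervalIntegrable (by fun_prop) _ _)]
  simp only [mul_zero, neg_zero, exp_zero, mul_one, add_zero]
  ring

lemma integral_cube_add_sq_mul_exp_neg_le {P Q μ : ℝ} (hP : 0 ≤ P) (hQ : 0 ≤ Q) (hμ : 0 < μ) :
    ∫ a in (0:ℝ)..1, P * (a ^ 3 * exp (-(μ * a))) + Q * (a ^ 2 * exp (-(μ * a)))
      ≤ 6 * P / μ ^ 4 + 2 * Q / μ ^ 3 := by
  have hint : ∀ n : ℕ, IntervalIntegrable (fun a : ℝ => a ^ n * exp (-(μ * a))) volume 0 1 :=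
    fun n => Continuous.intervalIntegrable (by fun_prop) _ _
  rw [integral_add ((hint 3).const_mul _) ((hint 2).const_mul _),
    intervalIntegral.integral_const_mul, intervalIntegral.integral_const_mul]
  calc _ ≤ P * (3 ! / μ ^ (3 + 1)) + Q * (2 ! / μ ^ (2 + 1)) := by
        gcongr <;> exact intervalIntegral_pow_mul_exp_neg_le zero_le_one hμ
    _ = 6 * P / μ ^ 4 + 2 * Q / μ ^ 3 := by
        simp only [Nat.factorial]
        ring

lemma abs_integral_exp_mul_sub_model_le {h g : ℝ → ℝ} {θ c K M B g₀ g₁ s : ℝ}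
    (hh : Continuous h) (hg : Continuous g) (hs : 0 < s) (hc : 0 < c) (hcθ : c ≤ θ)
    (hK : 0 ≤ K) (hM : 0 ≤ M)
    (h_lin : ∀ a ∈ Icc (0:ℝ) 1, c * a ≤ h a) (h_le : ∀ a ∈ Icc (0:ℝ) 1, h a ≤ θ * a)
    (h_cubic : ∀ a ∈ Icc (0:ℝ) 1, θ * a - K * a ^ 3 ≤ h a)
    (g_bound : ∀ t ∈ Icc 0 θ, |g t| ≤ B)
    (g_taylor : ∀ t ∈ Icc 0 θ, |g t - g₀ - g₁ * t| ≤ M * t ^ 2) :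
    |(∫ a in (0:ℝ)..1, exp (-(s * h a)) * g (h a))
        - ∫ a in (0:ℝ)..1, exp (-(s * θ * a)) * (g₀ + g₁ * (θ * a))|
      ≤ (6 * B * K / c ^ 4 + 2 * (M * θ ^ 2 + |g₁| * K) / c ^ 3) / s ^ 3 := by
  set E := M * θ ^ 2 + |g₁| * K
  have hB : 0 ≤ B := (abs_nonneg _).trans (g_bound 0 ⟨le_rfl, hc.le.trans hcθ⟩)
  have hE : 0 ≤ E := by positivity
  have hpt : ∀ a ∈ Icc (0:ℝ) 1,
      |exp (-(s * h a)) * g (h a) - exp (-(s * θ * a)) * (g₀ + g₁ * (θ * a))|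
        ≤ B * K * s * (a ^ 3 * exp (-(s * c * a))) + E * (a ^ 2 * exp (-(s * c * a))) := by
    intro a ha
    have ha0 : 0 ≤ a := ha.1
    have hx : h a ∈ Icc 0 (θ * a) := ⟨(mul_nonneg hc.le ha.1).trans (h_lin a ha), h_le a ha⟩
    have hxθ : h a ∈ Icc 0 θ := ⟨hx.1, hx.2.trans (by nlinarith [ha.2])⟩
    have hexp_le : ∀ y, c * a ≤ y → exp (-(s * y)) ≤ exp (-(s * c * a)) := fun y hy => by
      rw [mul_assoc]; gcongr
    rw [mul_assoc s θ a]
    refine (abs_exp_mul_sub_exp_mul_le hs.le hx.2 (g_bound _ hxθ) (abs_sub_affine_le_of_taylor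
      ha hK hM hx (h_cubic a ha) (g_taylor _ hxθ))).trans ?_
    calc s * (θ * a - h a) * exp (-(s * h a)) * B + exp (-(s * (θ * a))) * (E * a ^ 2)
        ≤ s * (K * a ^ 3) * exp (-(s * c * a)) * B + exp (-(s * c * a)) * (E * a ^ 2) := by
          gcongr s * ?_ * ?_ * B + ?_ * _
          · linarith [h_cubic a ha]
          · exact hexp_le _ (h_lin a ha)
          · exact hexp_le _ (by nlinarith [ha.1])
      _ = _ := by ring
  rw [← integral_sub (Continuous.intervalIntegrable (by fun_prop) _ _)
    (Continuous.intervalIntegrable (by fun_prop) _ _), ← Real.norm_eq_abs]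
  calc _ ≤ ∫ a in (0:ℝ)..1,
        B * K * s * (a ^ 3 * exp (-(s * c * a))) + E * (a ^ 2 * exp (-(s * c * a))) :=
        norm_integral_le_of_norm_le zero_le_one
          (Eventually.of_forall fun a ha => hpt a (Ioc_subset_Icc_self ha))
          (Continuous.intervalIntegrable (by fun_prop) _ _)
    _ ≤ 6 * (B * K * s) / (s * c) ^ 4 + 2 * E / (s * c) ^ 3 :=
        integral_cube_add_sq_mul_exp_neg_le (by positivity) hE (by positivity)
    _ = (6 * B * K / c ^ 4 + 2 * E / c ^ 3) / s ^ 3 := by field_simp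

lemma isLittleO_exp_neg_mul_mul_div_add_div (u v r : ℝ) {θ : ℝ} (hθ : 0 < θ) :
    (fun s => exp (-(s * θ)) * (u / s + v / s ^ 2)) =o[atTop] fun s => s ^ r := by
  have hexp : (fun s => exp (-(s * θ))) =o[atTop] fun s => s ^ r :=
    (isLittleO_exp_neg_mul_rpow_atTop hθ r).congr_left fun s => by rw [neg_mul, mul_comm]
  have hbdd : (fun s : ℝ => u / s + v / s ^ 2) =O[atTop] fun _ => (1 : ℝ) :=
    ((tendsto_const_nhds.div_atTop tendsto_id).add
      (tendsto_const_nhds.div_atTop (tendsto_pow_atTop two_ne_zero))).isBigO_one ℝ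
  simpa using hexp.mul_isBigO hbdd

theorem isBigO_laplace_two_term_expansion {h g : ℝ → ℝ} {θ c K M g₀ g₁ : ℝ}
    (hh : Continuous h) (hg : Continuous g) (hc : 0 < c)
    (h_lin : ∀ a ∈ Icc (0:ℝ) 1, c * a ≤ h a) (h_le : ∀ a ∈ Icc (0:ℝ) 1, h a ≤ θ * a)
    (h_cubic : ∀ a ∈ Icc (0:ℝ) 1, θ * a - K * a ^ 3 ≤ h a)
    (g_taylor : ∀ t ∈ Icc 0 θ, |g t - g₀ - g₁ * t| ≤ M * t ^ 2) :
    (fun s => θ * (∫ a in (0:ℝ)..1, exp (-(s * h a)) * g (h a)) - (g₀ / s + g₁ / s ^ 2))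
      =O[atTop] fun s => s ^ (-3 : ℝ) := by
  have h_one : (1:ℝ) ∈ Icc (0:ℝ) 1 := right_mem_Icc.2 zero_le_one
  have hcθ : c ≤ θ := by simpa using (h_lin 1 h_one).trans (h_le 1 h_one)
  have hθ : 0 < θ := hc.trans_le hcθ
  have hK : 0 ≤ K := by linarith [h_cubic 1 h_one, h_le 1 h_one]
  have hM : 0 ≤ M := nonneg_of_mul_nonneg_left
    ((abs_nonneg _).trans (g_taylor θ (right_mem_Icc.2 hθ.le))) (by positivity)
  obtain ⟨B, hB⟩ := isCompact_Icc.exists_bound_of_continuousOn (s := Icc 0 θ) hg.continuousOn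
  have hcompare : (fun s => θ * ((∫ a in (0:ℝ)..1, exp (-(s * h a)) * g (h a))
      - ∫ a in (0:ℝ)..1, exp (-(s * θ * a)) * (g₀ + g₁ * (θ * a))))
      =O[atTop] fun s => s ^ (-3 : ℝ) := by
    refine IsBigO.of_bound (θ * (6 * B * K / c ^ 4 + 2 * (M * θ ^ 2 + |g₁| * K) / c ^ 3)) ?_
    filter_upwards [eventually_gt_atTop 0] with s hs
    simp only [norm_mul, Real.norm_eq_abs]
    rw [abs_of_pos hθ, abs_of_pos (rpow_pos_of_pos hs _), rpow_neg hs.le, rpow_ofNat, mul_assoc,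
      ← div_eq_mul_inv]
    exact mul_le_mul_of_nonneg_left (abs_integral_exp_mul_sub_model_le hh hg hs hc hcθ hK hM
      h_lin h_le h_cubic hB g_taylor) hθ.le
  refine (hcompare.sub (isLittleO_exp_neg_mul_mul_div_add_div (g₀ + g₁ * θ) g₁ _ hθ).isBigO
    ).congr' ?_ EventuallyEq.rfl
  filter_upwards [eventually_gt_atTop 0] with s hs
  rw [mul_sub, integral_exp_neg_mul_affine θ g₀ g₁ hs.ne']
  ring

lemma exists_abs_le_mul_rpow_of_isBigO {f : ℝ → ℝ} {r r' : ℝ} (hr : r ≤ r')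
    (hf : f =O[atTop] fun s => s ^ r) :
    ∃ C s₀ : ℝ, ∀ s ≥ s₀, |f s| ≤ C * s ^ r' := by
  obtain ⟨C, hC, hCf⟩ := hf.exists_pos
  obtain ⟨s₀, hs₀⟩ := eventually_atTop.1 (hCf.bound.and (eventually_ge_atTop 1))
  refine ⟨C, s₀, fun s hs => ?_⟩
  obtain ⟨hfs, hs1⟩ := hs₀ s hs
  rw [Real.norm_eq_abs, Real.norm_eq_abs, abs_of_nonneg (rpow_nonneg (by linarith) _)] at hfs
  exact hfs.trans (by gcongr)

lemma MonotoneOn.exists_pos_mul_le_of_cubic_le {h : ℝ → ℝ} {θ K : ℝ}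
    (hmono : MonotoneOn h (Icc 0 1)) (hθ : 0 < θ) (hK : 0 ≤ K)
    (h_cubic : ∀ a ∈ Icc (0:ℝ) 1, θ * a - K * a ^ 3 ≤ h a) :
    ∃ c > 0, ∀ a ∈ Icc (0:ℝ) 1, c * a ≤ h a := by
  -- On `[0, a₁]` the cubic bound gives `h a ≥ θ a / 2`; beyond `a₁` monotonicity takes over.
  set a₁ := θ / (θ + 2 * K)
  have ha₁ : a₁ ∈ Icc (0:ℝ) 1 := ⟨by positivity, div_le_one_of_le₀ (by linarith) (by positivity)⟩
  have hKa₁ : K * a₁ ≤ θ / 2 := by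
    rw [mul_div_assoc', div_le_div_iff₀ (by positivity) two_pos]
    nlinarith
  have h_half : ∀ a ∈ Icc 0 a₁, θ / 2 * a ≤ h a := fun a ha => by
    have hsq : a ^ 2 ≤ a₁ := by nlinarith [ha.1, ha.2, ha₁.2]
    have hKa : K * a ^ 2 ≤ θ / 2 := by nlinarith
    nlinarith [h_cubic a ⟨ha.1, ha.2.trans ha₁.2⟩, ha.1]
  refine ⟨θ / 2 * a₁, by positivity, fun a ha => ?_⟩
  rcases le_total a a₁ with haa₁ | ha₁a
  · calc θ / 2 * a₁ * a ≤ θ / 2 * a := by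
          nlinarith [mul_nonneg (mul_nonneg hθ.le ha.1) (sub_nonneg.2 ha₁.2)]
      _ ≤ h a := h_half a ⟨ha.1, haa₁⟩
  · calc θ / 2 * a₁ * a ≤ θ / 2 * a₁ := by
          nlinarith [mul_nonneg (mul_nonneg hθ.le ha₁.1) (sub_nonneg.2 ha.2)]
      _ ≤ h a₁ := h_half a₁ ⟨ha₁.1, le_rfl⟩
      _ ≤ h a := hmono ha₁ ha ha₁a

lemma ubv_pos (n : ℕ) : 0 < ubv n :=
  ENNReal.toReal_pos (measure_ball_pos volume 0 one_pos).ne' measure_ball_lt_top.ne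

section SlabProfile

variable {p y : ℝ}

lemma continuous_one_sub_sq_rpow (hp : 0 ≤ p) : Continuous fun y : ℝ => (1 - y ^ 2) ^ p :=
  (by fun_prop : Continuous fun y : ℝ => 1 - y ^ 2).rpow_const fun _ => Or.inr hp

lemma one_sub_sq_mem_Icc (hy : y ∈ Icc (0:ℝ) 1) : 1 - y ^ 2 ∈ Icc (0:ℝ) 1 :=
  ⟨by nlinarith [hy.1, hy.2], by nlinarith⟩

lemma one_sub_sq_rpow_le_one (hp : 0 ≤ p) (hy : y ∈ Icc (0:ℝ) 1) : (1 - y ^ 2) ^ p ≤ 1 :=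
  rpow_le_one (one_sub_sq_mem_Icc hy).1 (one_sub_sq_mem_Icc hy).2 hp

lemma one_sub_mul_sq_le_one_sub_sq_rpow (hp : 0 ≤ p) (hy : y ∈ Icc (0:ℝ) 1) :
    1 - max p 1 * y ^ 2 ≤ (1 - y ^ 2) ^ p := by
  obtain ⟨h0, h1⟩ := one_sub_sq_mem_Icc hy
  calc 1 - max p 1 * y ^ 2 = 1 + max p 1 * (-y ^ 2) := by ring
    _ ≤ (1 + -y ^ 2) ^ max p 1 :=
      one_add_mul_self_le_rpow_one_add (by linarith) (le_max_right _ _)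
    _ ≤ (1 - y ^ 2) ^ p := by
      rw [← sub_eq_add_neg]
      exact rpow_le_rpow_of_exponent_ge' h0 h1 hp (le_max_left _ _)

end SlabProfile

section Slab

variable {d : ℕ}

lemma slab_exponent_nonneg (hd : 1 ≤ d) : 0 ≤ ((d:ℝ) - 1) / 2 := by
  have : (1:ℝ) ≤ d := by exact_mod_cast hd
  linarith

lemma continuous_hSlab (hd : 1 ≤ d) : Continuous (hSlab d) :=
  continuous_const.mul <| continuous_primitive
    (fun _ _ => (continuous_one_sub_sq_rpow (slab_exponent_nonneg hd)).intervalIntegrable _ _) 0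

lemma monotoneOn_hSlab (hd : 1 ≤ d) : MonotoneOn (hSlab d) (Icc 0 1) := by
  intro a ha b hb hab
  refine mul_le_mul_of_nonneg_left ?_ (ubv_pos _).le
  refine integral_mono_interval le_rfl ha.1 hab ?_
    ((continuous_one_sub_sq_rpow (slab_exponent_nonneg hd)).intervalIntegrable _ _)
  filter_upwards [ae_restrict_mem measurableSet_Ioc] with y hy
  exact rpow_nonneg (one_sub_sq_mem_Icc ⟨hy.1.le, hy.2.trans hb.2⟩).1 _

lemma hSlab_le_mul (hd : 1 ≤ d) {a : ℝ} (ha : a ∈ Icc (0:ℝ) 1) :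
    hSlab d a ≤ ubv (d - 1) * a := by
  refine mul_le_mul_of_nonneg_left ?_ (ubv_pos _).le
  calc (∫ y in (0:ℝ)..a, (1 - y ^ 2) ^ (((d:ℝ) - 1) / 2)) ≤ ∫ y in (0:ℝ)..a, (1:ℝ) :=
        integral_mono_on ha.1
          ((continuous_one_sub_sq_rpow (slab_exponent_nonneg hd)).intervalIntegrable _ _)
          intervalIntegrable_const fun y hy =>
            one_sub_sq_rpow_le_one (slab_exponent_nonneg hd) ⟨hy.1, hy.2.trans ha.2⟩
    _ = a := by simp

lemma mul_sub_cube_le_hSlab (hd : 1 ≤ d) {a : ℝ} (ha : a ∈ Icc (0:ℝ) 1) :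
    ubv (d - 1) * a - ubv (d - 1) * max (((d:ℝ) - 1) / 2) 1 / 3 * a ^ 3 ≤ hSlab d a := by
  set κ := max (((d:ℝ) - 1) / 2) 1
  calc ubv (d - 1) * a - ubv (d - 1) * κ / 3 * a ^ 3
      = ubv (d - 1) * ∫ y in (0:ℝ)..a, (1 - κ * y ^ 2) := by
        rw [integral_sub intervalIntegrable_const ((intervalIntegrable_pow 2).const_mul κ),
          intervalIntegral.integral_const_mul, integral_pow, intervalIntegral.integral_const,
          smul_eq_mul]
        ring
    _ ≤ hSlab d a := by
        refine mul_le_mul_of_nonneg_left ?_ (ubv_pos _).le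
        exact integral_mono_on ha.1 (Continuous.intervalIntegrable (by fun_prop) _ _)
          ((continuous_one_sub_sq_rpow (slab_exponent_nonneg hd)).intervalIntegrable _ _)
          fun y hy => one_sub_mul_sq_le_one_sub_sq_rpow (slab_exponent_nonneg hd)
            ⟨hy.1, hy.2.trans ha.2⟩

end Slab

theorem integral_exp_slab_asymptotics (d : ℕ) (hd : 2 ≤ d) (ℓ : ℕ)
    (α₀ : ℝ) (ε : ℝ) (hε : ε ∈ Set.Ioo (0:ℝ) 1) :
    ∃ C s₀ : ℝ, ∀ s ≥ s₀,
      |ubv (d-1) * (∫ a in (0:ℝ)..1, Real.exp (-(s * hSlab d a)) * (α₀ + hSlab d a)^ℓ)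
        - (α₀^ℓ / s + (ℓ:ℝ) * α₀^(ℓ-1) / s^2)| ≤ C * s ^ (ε - 3) := by
  have hd₁ : 1 ≤ d := by omega
  have hθ := ubv_pos (d - 1)
  have h_cubic := fun a (ha : a ∈ Icc (0:ℝ) 1) => mul_sub_cube_le_hSlab hd₁ ha
  obtain ⟨c, hc, h_lin⟩ :=
    (monotoneOn_hSlab hd₁).exists_pos_mul_le_of_cubic_le hθ (by positivity) h_cubic
  obtain ⟨M, hM⟩ := exists_abs_add_pow_sub_le α₀ (ubv (d - 1)) ℓ
  refine exists_abs_le_mul_rpow_of_isBigO (by linarith [hε.1]) <|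
    isBigO_laplace_two_term_expansion (g := fun t => (α₀ + t) ^ ℓ) (continuous_hSlab hd₁)
      (by fun_prop) hc h_lin (fun a ha => hSlab_le_mul hd₁ ha) h_cubic
      fun t ht => hM t (abs_le.2 ⟨by linarith [ht.1], ht.2⟩)
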